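/- Let λ ∈ ℂ, B = λI ∈ M_2(ℂ), and let φ = (φ_1,φ_2) : 𝔻 → 𝔾_2 be holomorphic with φ(0) = 0. Then there exists a holomorphic map ψ : 𝔻 → Ω_2 satisfying σ∘ψ = φ, ψ(0) = 0 and ψ′(0) = B if and only if φ_1′(0) = 2λ, φ_2′(0) = 0, φ_2″(0) = 2λ², and φ_2‴(0) = 3λ φ_1″(0). -/

import Mathlib

open Metric Matrix Polynomial Set Filter

noncomputable section

/-- The open unit disc in `ℂ`. -/
def unitDisc : Set ℂ := Metric.ball 0 1

/-- The spectral ball `Ω_n`: matrices whose spectral radius is `< 1`, i.e. all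
eigenvalues have modulus `< 1`. -/
def SpectralBall (n : ℕ) : Set (Matrix (Fin n) (Fin n) ℂ) :=
  {A | ∀ z ∈ spectrum ℂ A, ‖z‖ < 1}

/-- `σ(A) = (σ_1(A), …, σ_n(A))`, the signed coefficients of the characteristic
polynomial: `det (t•I − A) = ∑_{j=0}^n (−1)^j σ_j(A) t^(n−j)`.  Index `i : Fin n`
corresponds to `σ_{i+1}`. -/
def sigmaCoeff (n : ℕ) (A : Matrix (Fin n) (Fin n) ℂ) : Fin n → ℂ :=
  fun i => (-1 : ℂ) ^ ((i : ℕ) + 1) * A.charpoly.coeff (n - ((i : ℕ) + 1))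

/-- The symmetrized polydisc `𝔾_n = σ(Ω_n)`. -/
def SymPolydisc (n : ℕ) : Set (Fin n → ℂ) :=
  sigmaCoeff n '' SpectralBall n

/-- A matrix is scalar if it is `c • I` for some `c : ℂ`. -/
def IsScalarMatrix {n : ℕ} (A : Matrix (Fin n) (Fin n) ℂ) : Prop :=
  ∃ c : ℂ, A = c • (1 : Matrix (Fin n) (Fin n) ℂ)

/-- A matrix is cyclic (non-derogatory) if it admits a cyclic vector `v`, i.e.
`v, A v, …, A^(n−1) v` span `ℂ^n`. -/
def IsCyclicMatrix {n : ℕ} (A : Matrix (Fin n) (Fin n) ℂ) : Prop :=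
  ∃ v : Fin n → ℂ,
    Submodule.span ℂ (Set.range fun i : Fin n => (A ^ (i : ℕ)).mulVec v) = ⊤

/-- A matrix-valued map is holomorphic on the unit disc if each entry is. -/
def MatHolo {n : ℕ} (ψ : ℂ → Matrix (Fin n) (Fin n) ℂ) : Prop :=
  ∀ i j : Fin n, DifferentiableOn ℂ (fun z => ψ z i j) unitDisc

/-- A matrix-valued map is bounded on the unit disc. -/
def MatBounded {n : ℕ} (ψ : ℂ → Matrix (Fin n) (Fin n) ℂ) : Prop :=
  ∃ C : ℝ, ∀ z ∈ unitDisc, ∀ i j : Fin n, ‖ψ z i j‖ ≤ C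

/-- The spectral radius of a matrix. -/
def specRad (n : ℕ) (A : Matrix (Fin n) (Fin n) ℂ) : ℝ :=
  sSup ((fun z => ‖z‖) '' spectrum ℂ A)

/-- The Lempert function of the spectral ball `Ω_n`. -/
def lempertOmega (n : ℕ) (A B : Matrix (Fin n) (Fin n) ℂ) : ℝ :=
  sInf {r : ℝ | ∃ α : ℂ, α ∈ unitDisc ∧ ‖α‖ = r ∧
    ∃ ψ : ℂ → Matrix (Fin n) (Fin n) ℂ, MatHolo ψ ∧
      Set.MapsTo ψ unitDisc (SpectralBall n) ∧ ψ 0 = A ∧ ψ α = B}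

/-- The Kobayashi–Royden pseudometric of the spectral ball `Ω_n`. -/
def kobayashiOmega (n : ℕ) (A B : Matrix (Fin n) (Fin n) ℂ) : ℝ :=
  sInf {γ : ℝ | 0 ≤ γ ∧ ∃ ψ : ℂ → Matrix (Fin n) (Fin n) ℂ, MatHolo ψ ∧
    Set.MapsTo ψ unitDisc (SpectralBall n) ∧ ψ 0 = A ∧
    ∀ i j : Fin n, (γ : ℂ) * deriv (fun z => ψ z i j) 0 = B i j}

/-!
Write `ψ = !![a, b; c, d]`, so that `σ(ψ) = (a + d, a d - b c)`. If `ψ(0) = 0` and `ψ'(0) = λ I`,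
the Leibniz rule expresses the first three derivatives of `a d - b c` at `0` through those of `a`
and `d` alone, which gives the four conditions.

Conversely, given `φ = (u, v)`, the conditions say exactly that the discriminant `u² - 4 v` of
`t² - u t + v` vanishes to order `4` at `0`, so `u² - 4 v = z⁴ k` with `k` holomorphic. Then
`ψ = !![u/2, z²/2; z² k/2, u/2]` has `σ(ψ) = φ`, `ψ(0) = 0` and `ψ'(0) = λ I`, and it takes values
in `Ω_2` because the spectrum of a matrix is determined by `σ`.
-/

open Topology

section ProductAtZero

variable {𝕜 : Type*} [NontriviallyNormedField 𝕜] {f g : 𝕜 → 𝕜} {x : 𝕜}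

lemma iteratedDeriv_one_fun_mul_of_eq_zero (hf : ContDiffAt 𝕜 1 f x) (hg : ContDiffAt 𝕜 1 g x)
    (hf0 : f x = 0) (hg0 : g x = 0) :
    iteratedDeriv 1 (fun z => f z * g z) x = 0 := by
  simp [iteratedDeriv_fun_mul hf hg, Finset.sum_range_succ, hf0, hg0]

lemma iteratedDeriv_two_fun_mul_of_eq_zero (hf : ContDiffAt 𝕜 2 f x) (hg : ContDiffAt 𝕜 2 g x)
    (hf0 : f x = 0) (hg0 : g x = 0) :
    iteratedDeriv 2 (fun z => f z * g z) x = 2 * deriv f x * deriv g x := by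
  simp [iteratedDeriv_fun_mul hf hg, Finset.sum_range_succ, hf0, hg0]

lemma iteratedDeriv_three_fun_mul_of_eq_zero (hf : ContDiffAt 𝕜 3 f x) (hg : ContDiffAt 𝕜 3 g x)
    (hf0 : f x = 0) (hg0 : g x = 0) :
    iteratedDeriv 3 (fun z => f z * g z) x =
      3 * (iteratedDeriv 2 f x * deriv g x + deriv f x * iteratedDeriv 2 g x) := by
  simp [iteratedDeriv_fun_mul hf hg, Finset.sum_range_succ, hf0, hg0, Nat.choose]
  ring

end ProductAtZero

lemma exists_eq_pow_mul_of_iteratedDeriv_eq_zero {f : ℂ → ℂ} {U : Set ℂ} (hU : IsOpen U)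
    (h0 : (0 : ℂ) ∈ U) (hf : DifferentiableOn ℂ f U) {n : ℕ}
    (hfn : ∀ i < n, iteratedDeriv i f 0 = 0) :
    ∃ g : ℂ → ℂ, DifferentiableOn ℂ g U ∧ ∀ z, f z = z ^ n * g z := by
  obtain ⟨g, hg0, hfg⟩ := (hf.analyticAt (hU.mem_nhds h0)).exists_eq_sum_add_pow_mul n
  have hsum : ∀ z : ℂ, ∑ i ∈ Finset.range n, (z ^ i / i.factorial) • iteratedDeriv i f 0 = 0 :=
    fun z => Finset.sum_eq_zero fun i hi => by simp [hfn i (Finset.mem_range.mp hi)]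
  replace hfg (z : ℂ) : f z = z ^ n * g z := by rw [hfg z, hsum z, zero_add, smul_eq_mul]
  refine ⟨g, fun z hz => ?_, hfg⟩
  rcases eq_or_ne z 0 with rfl | hz0
  · exact hg0.differentiableAt.differentiableWithinAt
  · have hg : g =ᶠ[𝓝 z] fun w => f w / w ^ n := by
      filter_upwards [eventually_ne_nhds hz0] with w hw
      rw [hfg w, mul_div_cancel_left₀ _ (pow_ne_zero n hw)]
    exact (((hf.differentiableAt (hU.mem_nhds hz)).div (differentiableAt_pow n)
      (pow_ne_zero n hz0)).congr_of_eventuallyEq hg).differentiableWithinAt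

lemma sigmaCoeff_two (A : Matrix (Fin 2) (Fin 2) ℂ) : sigmaCoeff 2 A = ![A.trace, A.det] := by
  ext i
  fin_cases i
  · simp [sigmaCoeff, Matrix.trace_eq_neg_charpoly_coeff]
  · simp [sigmaCoeff, Matrix.det_eq_sign_charpoly_coeff]

lemma charpoly_eq_of_sigmaCoeff_eq {n : ℕ} {A B : Matrix (Fin n) (Fin n) ℂ}
    (h : sigmaCoeff n A = sigmaCoeff n B) : A.charpoly = B.charpoly := by
  ext k
  rcases lt_trichotomy k n with hk | rfl | hk
  · have := congrFun h ⟨n - (k + 1), by omega⟩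
    simp only [sigmaCoeff, show n - (n - (k + 1) + 1) = k by omega] at this
    exact mul_left_cancel₀ (pow_ne_zero _ (by norm_num)) this
  · have hA := A.charpoly_monic.leadingCoeff
    have hB := B.charpoly_monic.leadingCoeff
    simp_all [Polynomial.leadingCoeff]
  · rw [coeff_eq_zero_of_natDegree_lt (by simpa using hk),
      coeff_eq_zero_of_natDegree_lt (by simpa using hk)]

lemma spectrum_eq_of_sigmaCoeff_eq {n : ℕ} {A B : Matrix (Fin n) (Fin n) ℂ}
    (h : sigmaCoeff n A = sigmaCoeff n B) : spectrum ℂ A = spectrum ℂ B := by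
  ext μ
  simp [Matrix.mem_spectrum_iff_isRoot_charpoly, charpoly_eq_of_sigmaCoeff_eq h]

lemma mem_spectralBall_of_sigmaCoeff_mem_symPolydisc {n : ℕ} {A : Matrix (Fin n) (Fin n) ℂ}
    (hA : sigmaCoeff n A ∈ SymPolydisc n) : A ∈ SpectralBall n := by
  obtain ⟨B, hB, hBA⟩ := hA
  rwa [SpectralBall, Set.mem_ofPred_eq, spectrum_eq_of_sigmaCoeff_eq hBA.symm]

lemma derivs_trace_det_of_deriv_eq_smul_one {ψ : ℂ → Matrix (Fin 2) (Fin 2) ℂ} {x lam : ℂ}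
    (hψ : ∀ i j, AnalyticAt ℂ (fun z => ψ z i j) x) (hψx : ψ x = 0)
    (hψ' : ∀ i j, deriv (fun z => ψ z i j) x = (lam • (1 : Matrix (Fin 2) (Fin 2) ℂ)) i j) :
    deriv (fun z => (ψ z).trace) x = 2 * lam ∧
      deriv (fun z => (ψ z).det) x = 0 ∧
      iteratedDeriv 2 (fun z => (ψ z).det) x = 2 * lam ^ 2 ∧
      iteratedDeriv 3 (fun z => (ψ z).det) x
        = 3 * lam * iteratedDeriv 2 (fun z => (ψ z).trace) x := by
  have hC (i j) {n : ℕ} : ContDiffAt ℂ n (fun z => ψ z i j) x := (hψ i j).contDiffAt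
  have h0 (i j) : ψ x i j = 0 := by simp [hψx]
  have hd (i j) : deriv (fun z => ψ z i j) x = if i = j then lam else 0 := by
    simp [hψ', Matrix.one_apply]
  have htr : (fun z => (ψ z).trace) = fun z => ψ z 0 0 + ψ z 1 1 :=
    funext fun z => Matrix.trace_fin_two _
  have hdet : (fun z => (ψ z).det) = fun z => ψ z 0 0 * ψ z 1 1 - ψ z 0 1 * ψ z 1 0 :=
    funext fun z => Matrix.det_fin_two _
  have hdet_iter (n : ℕ) : iteratedDeriv n (fun z => (ψ z).det) x =
      iteratedDeriv n (fun z => ψ z 0 0 * ψ z 1 1) x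
        - iteratedDeriv n (fun z => ψ z 0 1 * ψ z 1 0) x := by
    rw [hdet, iteratedDeriv_fun_sub ((hC 0 0).mul (hC 1 1)) ((hC 0 1).mul (hC 1 0))]
  refine ⟨?_, ?_, ?_, ?_⟩
  · rw [htr, deriv_fun_add ((hψ 0 0).differentiableAt) ((hψ 1 1).differentiableAt), hd, hd]
    simp only [↓reduceIte]
    ring
  · rw [← iteratedDeriv_one, hdet_iter, iteratedDeriv_one_fun_mul_of_eq_zero (hC 0 0) (hC 1 1)
      (h0 0 0) (h0 1 1), iteratedDeriv_one_fun_mul_of_eq_zero (hC 0 1) (hC 1 0) (h0 0 1) (h0 1 0),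
      sub_zero]
  · rw [hdet_iter, iteratedDeriv_two_fun_mul_of_eq_zero (hC 0 0) (hC 1 1) (h0 0 0) (h0 1 1),
      iteratedDeriv_two_fun_mul_of_eq_zero (hC 0 1) (hC 1 0) (h0 0 1) (h0 1 0)]
    simp only [hd, Fin.isValue, ↓reduceIte, zero_ne_one, one_ne_zero]
    ring
  · rw [hdet_iter, iteratedDeriv_three_fun_mul_of_eq_zero (hC 0 0) (hC 1 1) (h0 0 0) (h0 1 1),
      iteratedDeriv_three_fun_mul_of_eq_zero (hC 0 1) (hC 1 0) (h0 0 1) (h0 1 0), htr,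
      iteratedDeriv_fun_add (hC 0 0) (hC 1 1)]
    simp only [hd, Fin.isValue, ↓reduceIte, zero_ne_one, one_ne_zero]
    ring

def scalarLift (u k : ℂ → ℂ) (z : ℂ) : Matrix (Fin 2) (Fin 2) ℂ :=
  !![u z / 2, z ^ 2 / 2; z ^ 2 * k z / 2, u z / 2]

lemma trace_scalarLift (u k : ℂ → ℂ) (z : ℂ) : (scalarLift u k z).trace = u z := by
  simp [scalarLift, Matrix.trace_fin_two]

lemma det_scalarLift (u k : ℂ → ℂ) (z : ℂ) :
    (scalarLift u k z).det = (u z ^ 2 - z ^ 4 * k z) / 4 := by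
  rw [scalarLift, Matrix.det_fin_two_of]
  ring

lemma iteratedDeriv_discriminant_eq_zero {u v : ℂ → ℂ} {x lam : ℂ} (hu : AnalyticAt ℂ u x)
    (hv : AnalyticAt ℂ v x) (hu0 : u x = 0) (hv0 : v x = 0) (h1 : deriv u x = 2 * lam)
    (h2 : deriv v x = 0) (h3 : iteratedDeriv 2 v x = 2 * lam ^ 2)
    (h4 : iteratedDeriv 3 v x = 3 * lam * iteratedDeriv 2 u x) :
    ∀ i < 4, iteratedDeriv i (fun z => u z * u z - 4 * v z) x = 0 := by
  have hC {n : ℕ} : ContDiffAt ℂ n u x := hu.contDiffAt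
  intro i hi
  rw [iteratedDeriv_fun_sub (hC.mul hC) (contDiffAt_const.mul hv.contDiffAt),
    iteratedDeriv_const_mul _ hv.contDiffAt]
  interval_cases i
  · simp [hu0, hv0]
  · rw [iteratedDeriv_one_fun_mul_of_eq_zero hC hC hu0 hu0, iteratedDeriv_one, h2]
    ring
  · rw [iteratedDeriv_two_fun_mul_of_eq_zero hC hC hu0 hu0, h1, h3]
    ring
  · rw [iteratedDeriv_three_fun_mul_of_eq_zero hC hC hu0 hu0, h1, h4]
    ring

lemma exists_det_scalarLift_eq {u v : ℂ → ℂ} {U : Set ℂ} {lam : ℂ} (hU : IsOpen U)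
    (h0 : (0 : ℂ) ∈ U) (hu : DifferentiableOn ℂ u U) (hv : DifferentiableOn ℂ v U)
    (hu0 : u 0 = 0) (hv0 : v 0 = 0)
    (h1 : deriv u 0 = 2 * lam) (h2 : deriv v 0 = 0) (h3 : iteratedDeriv 2 v 0 = 2 * lam ^ 2)
    (h4 : iteratedDeriv 3 v 0 = 3 * lam * iteratedDeriv 2 u 0) :
    ∃ k : ℂ → ℂ, DifferentiableOn ℂ k U ∧ ∀ z, (scalarLift u k z).det = v z := by
  obtain ⟨k, hk, hdiscr⟩ := exists_eq_pow_mul_of_iteratedDeriv_eq_zero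
    (f := fun z => u z * u z - 4 * v z) hU h0 ((hu.mul hu).sub (hv.const_mul 4))
    (iteratedDeriv_discriminant_eq_zero (hu.analyticAt (hU.mem_nhds h0))
      (hv.analyticAt (hU.mem_nhds h0)) hu0 hv0 h1 h2 h3 h4)
  refine ⟨k, hk, fun z => ?_⟩
  rw [det_scalarLift, ← hdiscr]
  ring

lemma differentiableOn_scalarLift {u k : ℂ → ℂ} {U : Set ℂ} (hu : DifferentiableOn ℂ u U)
    (hk : DifferentiableOn ℂ k U) (i j : Fin 2) :
    DifferentiableOn ℂ (fun z => scalarLift u k z i j) U := by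
  fin_cases i <;> fin_cases j <;>
    simp only [scalarLift, Matrix.of_apply, Matrix.cons_val', Matrix.cons_val_zero,
      Matrix.cons_val_one, Matrix.cons_val_fin_one, Fin.zero_eta, Fin.mk_one, Fin.isValue] <;>
    fun_prop

lemma scalarLift_zero {u k : ℂ → ℂ} (hu0 : u 0 = 0) : scalarLift u k 0 = 0 := by
  ext i j
  fin_cases i <;> fin_cases j <;> simp [scalarLift, hu0]

lemma deriv_scalarLift {u k : ℂ → ℂ} {lam : ℂ} (hk : DifferentiableAt ℂ k 0)
    (h1 : deriv u 0 = 2 * lam) (i j : Fin 2) :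
    deriv (fun z => scalarLift u k z i j) 0 = (lam • (1 : Matrix (Fin 2) (Fin 2) ℂ)) i j := by
  fin_cases i <;> fin_cases j
  · simp [scalarLift, deriv_div_const, h1]
  · simp [scalarLift]
  · simp [scalarLift, deriv_div_const, hk]
  · simp [scalarLift, deriv_div_const, h1]

lemma zero_mem_unitDisc : (0 : ℂ) ∈ unitDisc := mem_ball_self one_pos

lemma unitDisc_mem_nhds_zero : unitDisc ∈ 𝓝 (0 : ℂ) := isOpen_ball.mem_nhds zero_mem_unitDisc

/-- Proposition 9: lifting of the spectral Carathéodory–Fejér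
problem on `Ω_2` at `0` with scalar derivative datum `λI`. -/
theorem stmt_12 (lam : ℂ)
    (φ : ℂ → Fin 2 → ℂ) (hφ : DifferentiableOn ℂ φ unitDisc)
    (hφmaps : Set.MapsTo φ unitDisc (SymPolydisc 2)) (hφ0 : φ 0 = 0) :
    (∃ ψ : ℂ → Matrix (Fin 2) (Fin 2) ℂ, MatHolo ψ ∧
        Set.MapsTo ψ unitDisc (SpectralBall 2) ∧
        (∀ z ∈ unitDisc, sigmaCoeff 2 (ψ z) = φ z) ∧
        ψ 0 = 0 ∧ (∀ i j : Fin 2, deriv (fun z => ψ z i j) 0 =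
          (lam • (1 : Matrix (Fin 2) (Fin 2) ℂ)) i j)) ↔
      (deriv (fun z => φ z 0) 0 = 2 * lam ∧
        deriv (fun z => φ z 1) 0 = 0 ∧
        iteratedDeriv 2 (fun z => φ z 1) 0 = 2 * lam ^ 2 ∧
        iteratedDeriv 3 (fun z => φ z 1) 0
          = 3 * lam * iteratedDeriv 2 (fun z => φ z 0) 0) := by
  constructor
  · rintro ⟨ψ, hψ, -, hσ, hψ0, hψ'⟩
    have hσ' (i : Fin 2) : (fun z => sigmaCoeff 2 (ψ z) i) =ᶠ[𝓝 0] fun z => φ z i := by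
      filter_upwards [unitDisc_mem_nhds_zero] with z hz using congrFun (hσ z hz) i
    simp only [sigmaCoeff_two] at hσ'
    rw [← (hσ' 0).deriv_eq, ← (hσ' 1).deriv_eq, ← (hσ' 1).iteratedDeriv_eq,
      ← (hσ' 1).iteratedDeriv_eq, ← (hσ' 0).iteratedDeriv_eq]
    exact derivs_trace_det_of_deriv_eq_smul_one
      (fun i j => (hψ i j).analyticAt unitDisc_mem_nhds_zero) hψ0 hψ'
  · rintro ⟨h1, h2, h3, h4⟩
    have hu := differentiableOn_pi.mp hφ 0
    obtain ⟨k, hk, hdet⟩ := exists_det_scalarLift_eq isOpen_ball zero_mem_unitDisc hu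
      (differentiableOn_pi.mp hφ 1) (by simp [hφ0]) (by simp [hφ0]) h1 h2 h3 h4
    have hσ (z : ℂ) : sigmaCoeff 2 (scalarLift (fun z => φ z 0) k z) = φ z := by
      rw [sigmaCoeff_two, trace_scalarLift, hdet]
      ext i
      fin_cases i <;> rfl
    refine ⟨scalarLift _ k, differentiableOn_scalarLift hu hk,
      fun z hz => mem_spectralBall_of_sigmaCoeff_mem_symPolydisc (hσ z ▸ hφmaps hz),
      fun z _ => hσ z, scalarLift_zero (by simp [hφ0]),
      deriv_scalarLift (hk.differentiableAt unitDisc_mem_nhds_zero) h1⟩
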